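/- Let u have continuous partial derivatives up to order 1 on T and let v = (v₀, v_b, 𝐯_g) be a triple with v₀ ∈ Q_k(T), v_b ∈ L²(∂T) and 𝐯_g ∈ L²(∂T)². Then (∇_w(Q_N u), ∇_w v)_T = (∇u, ∇v₀)_T − ⟨v₀ − v_b, (𝐐_N∇u)·𝐧⟩_{∂T}. -/

import Mathlib

open MeasureTheory Real

noncomputable section

/-- `Q_k`: real polynomials in two variables of degree at most `k` in each variable. -/
def IsQk (k : ℕ) (v : ℝ → ℝ → ℝ) : Prop :=
  ∃ p : MvPolynomial (Fin 2) ℝ, (∀ i, p.degreeOf i ≤ k) ∧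
    ∀ x y : ℝ, v x y = MvPolynomial.eval ![x, y] p

/-- `P_k`: real polynomials in one variable of degree at most `k`. -/
def IsPk (k : ℕ) (f : ℝ → ℝ) : Prop :=
  ∃ p : Polynomial ℝ, p.natDegree ≤ k ∧ ∀ x : ℝ, f x = p.eval x

/-- Partial derivative in the first variable. -/
def pd1 (w : ℝ → ℝ → ℝ) : ℝ → ℝ → ℝ := fun x y => deriv (fun t => w t y) x

/-- Partial derivative in the second variable. -/
def pd2 (w : ℝ → ℝ → ℝ) : ℝ → ℝ → ℝ := fun x y => deriv (fun t => w x t) y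

/-- Laplacian. -/
def lapl (w : ℝ → ℝ → ℝ) : ℝ → ℝ → ℝ :=
  fun x y => pd1 (pd1 w) x y + pd2 (pd2 w) x y

/-- L² inner product over the rectangle `[x0,x1] × [y0,y1]`. -/
def ipT (x0 x1 y0 y1 : ℝ) (f g : ℝ → ℝ → ℝ) : ℝ :=
  ∫ x in x0..x1, ∫ y in y0..y1, f x y * g x y

/-- Squared L² norm over the rectangle `[x0,x1] × [y0,y1]`. -/
def normSqT (x0 x1 y0 y1 : ℝ) (w : ℝ → ℝ → ℝ) : ℝ := ipT x0 x1 y0 y1 w w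

/-- Squared L² norm over the two edges parallel to the x-axis (`∂T₁`). -/
def normSqE1 (x0 x1 y0 y1 : ℝ) (w : ℝ → ℝ → ℝ) : ℝ :=
  ∫ x in x0..x1, ((w x y0) ^ 2 + (w x y1) ^ 2)

/-- Squared L² norm over the two edges parallel to the y-axis (`∂T₂`). -/
def normSqE2 (x0 x1 y0 y1 : ℝ) (w : ℝ → ℝ → ℝ) : ℝ :=
  ∫ y in y0..y1, ((w x0 y) ^ 2 + (w x1 y) ^ 2)

/-- `P` is the L²(T)-orthogonal projection of `φ` onto `Q_k(T)`. -/
def IsProjT (k : ℕ) (x0 x1 y0 y1 : ℝ) (φ P : ℝ → ℝ → ℝ) : Prop :=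
  IsQk k P ∧ ∀ q : ℝ → ℝ → ℝ, IsQk k q →
    ipT x0 x1 y0 y1 (fun x y => φ x y - P x y) q = 0

/-- `g` is the L²(e)-orthogonal projection of `f` onto `P_k(e)`, for an edge
parametrized by `[a,b]`. -/
def IsProjE (k : ℕ) (a b : ℝ) (f g : ℝ → ℝ) : Prop :=
  IsPk k g ∧ ∀ q : ℝ → ℝ, IsPk k q → (∫ x in a..b, (f x - g x) * q x) = 0

/-- `f` belongs to `L²` of the edge parametrized by `[a,b]`. -/
def L2Edge (a b : ℝ) (f : ℝ → ℝ) : Prop :=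
  IntervalIntegrable f MeasureTheory.volume a b ∧
    IntervalIntegrable (fun x => (f x) ^ 2) MeasureTheory.volume a b

/-!
Tested against `q ∈ Q_k(T)²`, the defining identity of `∇_w (Q_N u)` does not see the projections
`Q₀` and `Q_b`, because `∇·q ∈ Q_k(T)` and the traces of `q` lie in `P_k(e)`; Green's formula then
turns it into `(∇u, q) = (𝐐_N ∇u, q)`. Hence `(∇_w Q_N u, ∇_w v) = (𝐐_N ∇u, ∇_w v)`, and the
defining identity of `∇_w v` with `q = 𝐐_N ∇u`, Green's formula for `v₀` and `∇v₀ ∈ Q_k(T)²` give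
the claim.
-/

open Finset Function

section Qk

variable {k : ℕ}

private def monomialExponent (i j : ℕ) : Fin 2 →₀ ℕ := Finsupp.single 0 i + Finsupp.single 1 j

theorem isQk_of_coeffs {v : ℝ → ℝ → ℝ} (c : ℕ → ℕ → ℝ)
    (hv : ∀ x y, v x y = ∑ i ∈ range (k + 1), ∑ j ∈ range (k + 1), c i j * x ^ i * y ^ j) :
    IsQk k v := by
  classical
  refine ⟨∑ i ∈ range (k + 1), ∑ j ∈ range (k + 1),
    MvPolynomial.monomial (monomialExponent i j) (c i j), fun n => ?_, fun x y => ?_⟩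
  · refine (MvPolynomial.degreeOf_sum_le _ _ _).trans (Finset.sup_le fun i hi => ?_)
    refine (MvPolynomial.degreeOf_sum_le _ _ _).trans (Finset.sup_le fun j hj => ?_)
    refine MvPolynomial.degreeOf_le_iff.mpr fun m hm => ?_
    rw [Finset.mem_singleton.mp (MvPolynomial.support_monomial_subset hm)]
    fin_cases n
    · simpa [monomialExponent, Nat.lt_succ_iff] using hi
    · simpa [monomialExponent, Nat.lt_succ_iff] using hj
  · simp [hv, monomialExponent, MvPolynomial.eval_monomial, Finsupp.prod_add_index, pow_add,
      mul_assoc]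

theorem IsQk.exists_coeffs {v : ℝ → ℝ → ℝ} (hv : IsQk k v) : ∃ c : ℕ → ℕ → ℝ,
    ∀ x y, v x y = ∑ i ∈ range (k + 1), ∑ j ∈ range (k + 1), c i j * x ^ i * y ^ j := by
  classical
  obtain ⟨p, hdeg, hp⟩ := hv
  refine ⟨fun i j => p.coeff (monomialExponent i j), fun x y => ?_⟩
  have hsupp : p.support ⊆
      (range (k + 1) ×ˢ range (k + 1)).image (fun ij => monomialExponent ij.1 ij.2) := by
    intro d hd
    refine Finset.mem_image.mpr ⟨(d 0, d 1), ?_, ?_⟩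
    · simp only [Finset.mem_product, Finset.mem_range, Nat.lt_succ_iff]
      exact ⟨MvPolynomial.degreeOf_le_iff.mp (hdeg 0) d hd,
        MvPolynomial.degreeOf_le_iff.mp (hdeg 1) d hd⟩
    · ext n; fin_cases n <;> simp [monomialExponent]
  have hinj : Set.InjOn (fun ij : ℕ × ℕ => monomialExponent ij.1 ij.2)
      ↑(range (k + 1) ×ˢ range (k + 1)) := by
    intro a _ b _ hab
    have h0 := DFunLike.congr_fun hab 0
    have h1 := DFunLike.congr_fun hab 1
    simp only [monomialExponent, Finsupp.add_apply, Finsupp.single_apply] at h0 h1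
    exact Prod.ext (by simpa using h0) (by simpa using h1)
  rw [hp, MvPolynomial.eval_eq', Finset.sum_subset hsupp (fun d _ hd => by
    rw [MvPolynomial.notMem_support_iff.mp hd, zero_mul]), Finset.sum_image hinj,
    Finset.sum_product]
  simp [monomialExponent, Fin.prod_univ_two, mul_assoc]

theorem IsQk.add {v w : ℝ → ℝ → ℝ} (hv : IsQk k v) (hw : IsQk k w) :
    IsQk k (fun x y => v x y + w x y) := by
  obtain ⟨p, hp, hpv⟩ := hv
  obtain ⟨q, hq, hqw⟩ := hw
  exact ⟨p + q, fun i => (MvPolynomial.degreeOf_add_le i p q).trans (max_le (hp i) (hq i)),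
    fun x y => by simp [hpv, hqw]⟩

theorem IsQk.swap {v : ℝ → ℝ → ℝ} (hv : IsQk k v) : IsQk k (fun x y => v y x) := by
  obtain ⟨c, hc⟩ := hv.exists_coeffs
  refine isQk_of_coeffs (fun i j => c j i) fun x y => ?_
  rw [hc, Finset.sum_comm]
  exact Finset.sum_congr rfl fun i _ => Finset.sum_congr rfl fun j _ => by ring

theorem IsQk.pd1 {v : ℝ → ℝ → ℝ} (hv : IsQk k v) : IsQk k (pd1 v) := by
  obtain ⟨c, hc⟩ := hv.exists_coeffs
  refine isQk_of_coeffs (fun i j => if i < k then (i + 1) * c (i + 1) j else 0) fun x y => ?_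
  have hderiv : HasDerivAt (fun t => v t y)
      (∑ i ∈ range (k + 1), ∑ j ∈ range (k + 1), c i j * (i * x ^ (i - 1)) * y ^ j) x := by
    simp_rw [hc]
    exact HasDerivAt.fun_sum fun i _ => HasDerivAt.fun_sum fun j _ =>
      ((hasDerivAt_pow i x).const_mul (c i j)).mul_const (y ^ j)
  show deriv (fun t => v t y) x = _
  rw [hderiv.deriv, Finset.sum_range_succ']
  conv_rhs => rw [Finset.sum_range_succ]
  simp only [Nat.cast_zero, zero_mul, mul_zero, Finset.sum_const_zero, add_zero, lt_irrefl,
    if_false, Nat.add_sub_cancel]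
  refine Finset.sum_congr rfl fun i hi => Finset.sum_congr rfl fun j _ => ?_
  rw [if_pos (Finset.mem_range.mp hi)]
  push_cast
  ring

theorem IsQk.pd2 {v : ℝ → ℝ → ℝ} (hv : IsQk k v) : IsQk k (pd2 v) :=
  hv.swap.pd1.swap

theorem IsQk.contDiff {v : ℝ → ℝ → ℝ} (hv : IsQk k v) {n : WithTop ℕ∞} :
    ContDiff ℝ n (uncurry v) := by
  obtain ⟨c, hc⟩ := hv.exists_coeffs
  have : uncurry v = fun p : ℝ × ℝ =>
      ∑ i ∈ range (k + 1), ∑ j ∈ range (k + 1), c i j * p.1 ^ i * p.2 ^ j :=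
    funext fun p => hc p.1 p.2
  rw [this]
  fun_prop

theorem IsQk.continuous {v : ℝ → ℝ → ℝ} (hv : IsQk k v) : Continuous (uncurry v) :=
  (hv.contDiff (n := 0)).continuous

theorem IsQk.isPk_left {v : ℝ → ℝ → ℝ} (hv : IsQk k v) (y : ℝ) : IsPk k (fun x => v x y) := by
  obtain ⟨c, hc⟩ := hv.exists_coeffs
  refine ⟨∑ i ∈ range (k + 1),
      Polynomial.C (∑ j ∈ range (k + 1), c i j * y ^ j) * Polynomial.X ^ i,
    Polynomial.natDegree_sum_le_of_forall_le _ _ fun i hi => ?_, fun x => ?_⟩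
  · exact (Polynomial.natDegree_C_mul_X_pow_le _ _).trans
      (Nat.lt_succ_iff.mp (Finset.mem_range.mp hi))
  · simp only [hc, Polynomial.eval_finsetSum, Polynomial.eval_mul, Polynomial.eval_C,
      Polynomial.eval_pow, Polynomial.eval_X, Finset.sum_mul]
    exact Finset.sum_congr rfl fun i _ => Finset.sum_congr rfl fun j _ => by ring

theorem IsQk.isPk_right {v : ℝ → ℝ → ℝ} (hv : IsQk k v) (x : ℝ) : IsPk k (fun y => v x y) :=
  hv.swap.isPk_left x

theorem IsPk.neg {f : ℝ → ℝ} (hf : IsPk k f) : IsPk k (fun x => -f x) := by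
  obtain ⟨p, hp, hpf⟩ := hf
  exact ⟨-p, by rwa [Polynomial.natDegree_neg], fun x => by simp [hpf]⟩

theorem IsPk.continuous {f : ℝ → ℝ} (hf : IsPk k f) : Continuous f := by
  obtain ⟨p, -, hpf⟩ := hf
  simpa only [← funext hpf] using p.continuous

end Qk

section PartialDerivatives

variable {w : ℝ → ℝ → ℝ}

theorem contDiff_uncurry_swap {n : WithTop ℕ∞} (hw : ContDiff ℝ n (uncurry w)) :
    ContDiff ℝ n (uncurry fun a b => w b a) :=
  hw.comp (contDiff_snd.prodMk contDiff_fst)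

theorem hasDerivAt_pd1 {x y : ℝ} (hw : DifferentiableAt ℝ (uncurry w) (x, y)) :
    HasDerivAt (fun t => w t y) (pd1 w x y) x :=
  have h : DifferentiableAt ℝ (fun t => w t y) x :=
    hw.comp (f := fun t => (t, y)) x (differentiableAt_id.prodMk (differentiableAt_const y))
  h.hasDerivAt

theorem hasDerivAt_pd2 {x y : ℝ} (hw : DifferentiableAt ℝ (uncurry w) (x, y)) :
    HasDerivAt (fun t => w x t) (pd2 w x y) y :=
  have h : DifferentiableAt ℝ (fun t => w x t) y :=
    hw.comp (f := fun t => (x, t)) y ((differentiableAt_const x).prodMk differentiableAt_id)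
  h.hasDerivAt

theorem continuous_pd1 (hw : ContDiff ℝ 1 (uncurry w)) : Continuous (uncurry (pd1 w)) := by
  have hfderiv : uncurry (pd1 w) = fun p => fderiv ℝ (uncurry w) p (1, 0) := by
    funext ⟨x, y⟩
    have h := ((hw.differentiable one_ne_zero) (x, y)).hasFDerivAt.comp_hasDerivAt x
      ((hasDerivAt_id x).prodMk (hasDerivAt_const x y))
    exact (hasDerivAt_pd1 ((hw.differentiable one_ne_zero) (x, y))).unique h
  rw [hfderiv]
  exact (hw.continuous_fderiv one_ne_zero).clm_apply continuous_const

theorem continuous_pd2 (hw : ContDiff ℝ 1 (uncurry w)) : Continuous (uncurry (pd2 w)) :=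
  (continuous_pd1 (contDiff_uncurry_swap hw)).comp continuous_swap

end PartialDerivatives

section RectangleIntegrals

variable {x0 x1 y0 y1 : ℝ} {f g : ℝ → ℝ → ℝ}

theorem intervalIntegrable_intervalIntegral (hf : Continuous (uncurry f)) :
    IntervalIntegrable (fun x => ∫ y in y0..y1, f x y) volume x0 x1 :=
  (intervalIntegral.continuous_parametric_intervalIntegral_of_continuous' hf y0 y1).intervalIntegrable
    _ _

theorem iteratedIntegral_add (hf : Continuous (uncurry f)) (hg : Continuous (uncurry g)) :
    (∫ x in x0..x1, ∫ y in y0..y1, (f x y + g x y)) =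
      (∫ x in x0..x1, ∫ y in y0..y1, f x y) + ∫ x in x0..x1, ∫ y in y0..y1, g x y := by
  rw [← intervalIntegral.integral_add (intervalIntegrable_intervalIntegral hf)
    (intervalIntegrable_intervalIntegral hg)]
  exact intervalIntegral.integral_congr fun x _ => intervalIntegral.integral_add
    ((hf.uncurry_left x).intervalIntegrable _ _) ((hg.uncurry_left x).intervalIntegrable _ _)

theorem iteratedIntegral_sub (hf : Continuous (uncurry f)) (hg : Continuous (uncurry g)) :
    (∫ x in x0..x1, ∫ y in y0..y1, (f x y - g x y)) =
      (∫ x in x0..x1, ∫ y in y0..y1, f x y) - ∫ x in x0..x1, ∫ y in y0..y1, g x y := by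
  rw [← intervalIntegral.integral_sub (intervalIntegrable_intervalIntegral hf)
    (intervalIntegrable_intervalIntegral hg)]
  exact intervalIntegral.integral_congr fun x _ => intervalIntegral.integral_sub
    ((hf.uncurry_left x).intervalIntegrable _ _) ((hg.uncurry_left x).intervalIntegrable _ _)

theorem iteratedIntegral_swap (hf : Continuous (uncurry f)) :
    (∫ x in x0..x1, ∫ y in y0..y1, f x y) = ∫ y in y0..y1, ∫ x in x0..x1, f x y :=
  intervalIntegral_intervalIntegral_swap <|
    (hf.continuousOn.integrableOn_compact (isCompact_uIcc.prod isCompact_uIcc)).mono_set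
      (Set.prod_mono Set.uIoc_subset_uIcc Set.uIoc_subset_uIcc)

theorem ipT_comm (f g : ℝ → ℝ → ℝ) : ipT x0 x1 y0 y1 f g = ipT x0 x1 y0 y1 g f := by
  simp only [ipT, mul_comm (f _ _)]

theorem ipT_swap (hf : Continuous (uncurry f)) (hg : Continuous (uncurry g)) :
    ipT x0 x1 y0 y1 f g = ipT y0 y1 x0 x1 (fun y x => f x y) (fun y x => g x y) :=
  iteratedIntegral_swap (hf.mul hg)

theorem ipT_sub_left {q : ℝ → ℝ → ℝ} (hf : Continuous (uncurry f)) (hg : Continuous (uncurry g))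
    (hq : Continuous (uncurry q)) :
    ipT x0 x1 y0 y1 (fun x y => f x y - g x y) q = ipT x0 x1 y0 y1 f q - ipT x0 x1 y0 y1 g q := by
  simp only [ipT, sub_mul]
  exact iteratedIntegral_sub (hf.mul hq) (hg.mul hq)

theorem ipT_add_right {w : ℝ → ℝ → ℝ} (hw : Continuous (uncurry w)) (hf : Continuous (uncurry f))
    (hg : Continuous (uncurry g)) :
    ipT x0 x1 y0 y1 w (fun x y => f x y + g x y) = ipT x0 x1 y0 y1 w f + ipT x0 x1 y0 y1 w g := by
  simp only [ipT, mul_add]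
  exact iteratedIntegral_add (hw.mul hf) (hw.mul hg)

end RectangleIntegrals

/-- `⟨w, q·𝐧⟩_{∂T}` on `T = [x0,x1] × [y0,y1]`, for `w` given by its restrictions `wB wT wL wR`
to the bottom, top, left and right edges. -/
def edgePairing (x0 x1 y0 y1 : ℝ) (wB wT wL wR : ℝ → ℝ) (q1 q2 : ℝ → ℝ → ℝ) : ℝ :=
  (∫ x in x0..x1, wB x * (-(q2 x y0))) + (∫ x in x0..x1, wT x * q2 x y1)
    + (∫ y in y0..y1, wL y * (-(q1 x0 y))) + ∫ y in y0..y1, wR y * q1 x1 y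

section Green

variable {x0 x1 y0 y1 : ℝ} {w q q1 q2 : ℝ → ℝ → ℝ}

theorem ipT_pd2_add_ipT_pd2 (hw : ContDiff ℝ 1 (uncurry w)) (hq : ContDiff ℝ 1 (uncurry q)) :
    ipT x0 x1 y0 y1 (pd2 w) q + ipT x0 x1 y0 y1 w (pd2 q) =
      ∫ x in x0..x1, (w x y1 * q x y1 - w x y0 * q x y0) := by
  rw [ipT, ipT, ← iteratedIntegral_add (f := fun x y => pd2 w x y * q x y)
    (g := fun x y => w x y * pd2 q x y) ((continuous_pd2 hw).mul hq.continuous)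
    (hw.continuous.mul (continuous_pd2 hq))]
  exact intervalIntegral.integral_congr fun x _ => intervalIntegral.integral_deriv_mul_eq_sub
    (fun y _ => hasDerivAt_pd2 (hw.differentiable one_ne_zero _))
    (fun y _ => hasDerivAt_pd2 (hq.differentiable one_ne_zero _))
    (((continuous_pd2 hw).uncurry_left x).intervalIntegrable _ _)
    (((continuous_pd2 hq).uncurry_left x).intervalIntegrable _ _)

theorem ipT_pd1_add_ipT_pd1 (hw : ContDiff ℝ 1 (uncurry w)) (hq : ContDiff ℝ 1 (uncurry q)) :
    ipT x0 x1 y0 y1 (pd1 w) q + ipT x0 x1 y0 y1 w (pd1 q) =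
      ∫ y in y0..y1, (w x1 y * q x1 y - w x0 y * q x0 y) := by
  rw [ipT_swap (continuous_pd1 hw) hq.continuous, ipT_swap hw.continuous (continuous_pd1 hq)]
  exact ipT_pd2_add_ipT_pd2 (contDiff_uncurry_swap hw) (contDiff_uncurry_swap hq)

theorem intervalIntegral_mul_sub_mul {a b : ℝ} {f g r s : ℝ → ℝ} (hf : Continuous f)
    (hg : Continuous g) (hr : Continuous r) (hs : Continuous s) :
    (∫ t in a..b, (f t * g t - r t * s t)) =
      (∫ t in a..b, r t * (-(s t))) + ∫ t in a..b, f t * g t := by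
  rw [intervalIntegral.integral_sub ((hf.fun_mul hg).intervalIntegrable _ _)
    ((hr.fun_mul hs).intervalIntegrable _ _)]
  simp only [mul_neg, intervalIntegral.integral_neg]
  ring

theorem ipT_grad_add_ipT_div (hw : ContDiff ℝ 1 (uncurry w)) (hq1 : ContDiff ℝ 1 (uncurry q1))
    (hq2 : ContDiff ℝ 1 (uncurry q2)) :
    ipT x0 x1 y0 y1 (pd1 w) q1 + ipT x0 x1 y0 y1 (pd2 w) q2
        + ipT x0 x1 y0 y1 w (fun x y => pd1 q1 x y + pd2 q2 x y) =
      edgePairing x0 x1 y0 y1 (w · y0) (w · y1) (w x0 ·) (w x1 ·) q1 q2 := by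
  have hw' := hw.continuous
  have hq1' := hq1.continuous
  have hq2' := hq2.continuous
  have h1 := ipT_pd1_add_ipT_pd1 (x0 := x0) (x1 := x1) (y0 := y0) (y1 := y1) hw hq1
  have h2 := ipT_pd2_add_ipT_pd2 (x0 := x0) (x1 := x1) (y0 := y0) (y1 := y1) hw hq2
  rw [intervalIntegral_mul_sub_mul (hw'.uncurry_left x1) (hq1'.uncurry_left x1)
    (hw'.uncurry_left x0) (hq1'.uncurry_left x0)] at h1
  rw [intervalIntegral_mul_sub_mul (hw'.uncurry_right y1) (hq2'.uncurry_right y1)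
    (hw'.uncurry_right y0) (hq2'.uncurry_right y0)] at h2
  rw [ipT_add_right hw' (continuous_pd1 hq1) (continuous_pd2 hq2), edgePairing]
  linarith

end Green

theorem intervalIntegral_sub_mul {a b : ℝ} {f g q : ℝ → ℝ} (hf : IntervalIntegrable f volume a b)
    (hg : IntervalIntegrable g volume a b) (hq : Continuous q) :
    (∫ t in a..b, (f t - g t) * q t) = (∫ t in a..b, f t * q t) - ∫ t in a..b, g t * q t := by
  simp only [sub_mul]
  exact intervalIntegral.integral_sub (hf.mul_continuousOn hq.continuousOn)
    (hg.mul_continuousOn hq.continuousOn)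

section Projections

variable {k : ℕ} {x0 x1 y0 y1 : ℝ}

theorem IsProjT.ipT_eq {φ P q : ℝ → ℝ → ℝ} (h : IsProjT k x0 x1 y0 y1 φ P)
    (hφ : Continuous (uncurry φ)) (hq : IsQk k q) :
    ipT x0 x1 y0 y1 φ q = ipT x0 x1 y0 y1 P q := by
  have h0 := h.2 q hq
  rwa [ipT_sub_left hφ h.1.continuous hq.continuous, sub_eq_zero] at h0

theorem IsProjE.integral_mul_eq {a b : ℝ} {f g q : ℝ → ℝ} (h : IsProjE k a b f g)
    (hf : IntervalIntegrable f volume a b) (hq : IsPk k q) :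
    (∫ t in a..b, f t * q t) = ∫ t in a..b, g t * q t := by
  have h0 := h.2 q hq
  rwa [intervalIntegral_sub_mul hf (h.1.continuous.intervalIntegrable _ _) hq.continuous,
    sub_eq_zero] at h0

theorem edgePairing_sub {aB aT aL aR bB bT bL bR : ℝ → ℝ} {q1 q2 : ℝ → ℝ → ℝ}
    (haB : IntervalIntegrable aB volume x0 x1) (haT : IntervalIntegrable aT volume x0 x1)
    (haL : IntervalIntegrable aL volume y0 y1) (haR : IntervalIntegrable aR volume y0 y1)
    (hbB : IntervalIntegrable bB volume x0 x1) (hbT : IntervalIntegrable bT volume x0 x1)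
    (hbL : IntervalIntegrable bL volume y0 y1) (hbR : IntervalIntegrable bR volume y0 y1)
    (hq1 : Continuous (uncurry q1)) (hq2 : Continuous (uncurry q2)) :
    edgePairing x0 x1 y0 y1 (fun x => aB x - bB x) (fun x => aT x - bT x)
        (fun y => aL y - bL y) (fun y => aR y - bR y) q1 q2 =
      edgePairing x0 x1 y0 y1 aB aT aL aR q1 q2 - edgePairing x0 x1 y0 y1 bB bT bL bR q1 q2 := by
  simp only [edgePairing]
  rw [intervalIntegral_sub_mul haB hbB (hq2.uncurry_right y0).fun_neg,
    intervalIntegral_sub_mul haT hbT (hq2.uncurry_right y1),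
    intervalIntegral_sub_mul haL hbL (hq1.uncurry_left x0).fun_neg,
    intervalIntegral_sub_mul haR hbR (hq1.uncurry_left x1)]
  ring

theorem edgePairing_eq_of_isProjE {u q1 q2 : ℝ → ℝ → ℝ} {qbB qbT qbL qbR : ℝ → ℝ}
    (hu : Continuous (uncurry u))
    (hB : IsProjE k x0 x1 (u · y0) qbB) (hT : IsProjE k x0 x1 (u · y1) qbT)
    (hL : IsProjE k y0 y1 (u x0 ·) qbL) (hR : IsProjE k y0 y1 (u x1 ·) qbR)
    (hq1 : IsQk k q1) (hq2 : IsQk k q2) :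
    edgePairing x0 x1 y0 y1 qbB qbT qbL qbR q1 q2 =
      edgePairing x0 x1 y0 y1 (u · y0) (u · y1) (u x0 ·) (u x1 ·) q1 q2 := by
  simp only [edgePairing]
  rw [hB.integral_mul_eq ((hu.uncurry_right y0).intervalIntegrable _ _) (hq2.isPk_left y0).neg,
    hT.integral_mul_eq ((hu.uncurry_right y1).intervalIntegrable _ _) (hq2.isPk_left y1),
    hL.integral_mul_eq ((hu.uncurry_left x0).intervalIntegrable _ _) (hq1.isPk_right x0).neg,
    hR.integral_mul_eq ((hu.uncurry_left x1).intervalIntegrable _ _) (hq1.isPk_right x1)]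

end Projections

/-- `(G1, G2) = ∇_w (w0, w_b)` on `T = [x0,x1] × [y0,y1]`, with `w_b` given by its restrictions
`wB wT wL wR` to the bottom, top, left and right edges. -/
def IsWeakGradient (k : ℕ) (x0 x1 y0 y1 : ℝ) (w0 : ℝ → ℝ → ℝ) (wB wT wL wR : ℝ → ℝ)
    (G1 G2 : ℝ → ℝ → ℝ) : Prop :=
  ∀ q1 q2 : ℝ → ℝ → ℝ, IsQk k q1 → IsQk k q2 →
    ipT x0 x1 y0 y1 G1 q1 + ipT x0 x1 y0 y1 G2 q2 =
      -(ipT x0 x1 y0 y1 w0 (fun x y => pd1 q1 x y + pd2 q2 x y))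
        + edgePairing x0 x1 y0 y1 wB wT wL wR q1 q2

namespace IsWeakGradient

variable {k : ℕ} {x0 x1 y0 y1 : ℝ} {q1 q2 : ℝ → ℝ → ℝ}

/-- The commuting property `∇_w (Q_N u) = 𝐐_N (∇u)`, tested against `Q_k(T)²`. -/
theorem eq_projT_grad {u P0u P1 P2 G1 G2 : ℝ → ℝ → ℝ} {qbB qbT qbL qbR : ℝ → ℝ}
    (hu : ContDiff ℝ 1 (uncurry u)) (hP0u : IsProjT k x0 x1 y0 y1 u P0u)
    (hP1 : IsProjT k x0 x1 y0 y1 (pd1 u) P1) (hP2 : IsProjT k x0 x1 y0 y1 (pd2 u) P2)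
    (hqbB : IsProjE k x0 x1 (u · y0) qbB) (hqbT : IsProjE k x0 x1 (u · y1) qbT)
    (hqbL : IsProjE k y0 y1 (u x0 ·) qbL) (hqbR : IsProjE k y0 y1 (u x1 ·) qbR)
    (hG : IsWeakGradient k x0 x1 y0 y1 P0u qbB qbT qbL qbR G1 G2)
    (hq1 : IsQk k q1) (hq2 : IsQk k q2) :
    ipT x0 x1 y0 y1 G1 q1 + ipT x0 x1 y0 y1 G2 q2 =
      ipT x0 x1 y0 y1 P1 q1 + ipT x0 x1 y0 y1 P2 q2 := by
  have hgreen := ipT_grad_add_ipT_div (x0 := x0) (x1 := x1) (y0 := y0) (y1 := y1) hu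
    hq1.contDiff hq2.contDiff
  rw [hG q1 q2 hq1 hq2, ← hP0u.ipT_eq hu.continuous (hq1.pd1.add hq2.pd2),
    edgePairing_eq_of_isProjE hu.continuous hqbB hqbT hqbL hqbR hq1 hq2,
    ← hP1.ipT_eq (continuous_pd1 hu) hq1, ← hP2.ipT_eq (continuous_pd2 hu) hq2]
  linarith

theorem eq_grad_sub_edgePairing {v0 Gv1 Gv2 : ℝ → ℝ → ℝ} {vbB vbT vbL vbR : ℝ → ℝ}
    (hv0 : IsQk k v0) (hvbB : IntervalIntegrable vbB volume x0 x1)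
    (hvbT : IntervalIntegrable vbT volume x0 x1) (hvbL : IntervalIntegrable vbL volume y0 y1)
    (hvbR : IntervalIntegrable vbR volume y0 y1)
    (hGv : IsWeakGradient k x0 x1 y0 y1 v0 vbB vbT vbL vbR Gv1 Gv2)
    (hq1 : IsQk k q1) (hq2 : IsQk k q2) :
    ipT x0 x1 y0 y1 Gv1 q1 + ipT x0 x1 y0 y1 Gv2 q2 =
      ipT x0 x1 y0 y1 (pd1 v0) q1 + ipT x0 x1 y0 y1 (pd2 v0) q2
        - edgePairing x0 x1 y0 y1 (fun x => v0 x y0 - vbB x) (fun x => v0 x y1 - vbT x)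
            (fun y => v0 x0 y - vbL y) (fun y => v0 x1 y - vbR y) q1 q2 := by
  have hv0' := hv0.continuous
  rw [hGv q1 q2 hq1 hq2, edgePairing_sub ((hv0'.uncurry_right y0).intervalIntegrable _ _)
    ((hv0'.uncurry_right y1).intervalIntegrable _ _) ((hv0'.uncurry_left x0).intervalIntegrable _ _)
    ((hv0'.uncurry_left x1).intervalIntegrable _ _) hvbB hvbT hvbL hvbR hq1.continuous
    hq2.continuous,
    ← ipT_grad_add_ipT_div hv0.contDiff hq1.contDiff hq2.contDiff]
  ring

end IsWeakGradient

theorem statement19_general (k : ℕ) (x0 x1 y0 y1 : ℝ)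
    (u : ℝ → ℝ → ℝ) (hu : ContDiff ℝ 1 (fun p : ℝ × ℝ => u p.1 p.2))
    -- the projections defining Q_N u and 𝐐_N(∇u)
    (P0u P1 P2 : ℝ → ℝ → ℝ)
    (hP0u : IsProjT k x0 x1 y0 y1 u P0u)
    (hP1 : IsProjT k x0 x1 y0 y1 (pd1 u) P1)
    (hP2 : IsProjT k x0 x1 y0 y1 (pd2 u) P2)
    (qbB qbT qbL qbR : ℝ → ℝ)
    (hqbB : IsProjE k x0 x1 (fun x => u x y0) qbB)
    (hqbT : IsProjE k x0 x1 (fun x => u x y1) qbT)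
    (hqbL : IsProjE k y0 y1 (fun y => u x0 y) qbL)
    (hqbR : IsProjE k y0 y1 (fun y => u x1 y) qbR)
    -- the triple v = (v₀, v_b, 𝐯_g), with L² data on each edge
    (v0 : ℝ → ℝ → ℝ) (hv0 : IsQk k v0)
    (vbB vbT vbL vbR : ℝ → ℝ)
    (hvbB : L2Edge x0 x1 vbB) (hvbT : L2Edge x0 x1 vbT)
    (hvbL : L2Edge y0 y1 vbL) (hvbR : L2Edge y0 y1 vbR)
    -- the discrete weak gradient of Q_N u
    (G1 G2 : ℝ → ℝ → ℝ)
    (hG : ∀ q1 q2 : ℝ → ℝ → ℝ, IsQk k q1 → IsQk k q2 →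
      ipT x0 x1 y0 y1 G1 q1 + ipT x0 x1 y0 y1 G2 q2 =
        -(ipT x0 x1 y0 y1 P0u (fun x y => pd1 q1 x y + pd2 q2 x y))
          + ((∫ x in x0..x1, qbB x * (-(q2 x y0)))
            + (∫ x in x0..x1, qbT x * q2 x y1)
            + (∫ y in y0..y1, qbL y * (-(q1 x0 y)))
            + (∫ y in y0..y1, qbR y * q1 x1 y)))
    -- the discrete weak gradient of v
    (Gv1 Gv2 : ℝ → ℝ → ℝ) (hGv1k : IsQk k Gv1) (hGv2k : IsQk k Gv2)
    (hGv : ∀ q1 q2 : ℝ → ℝ → ℝ, IsQk k q1 → IsQk k q2 →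
      ipT x0 x1 y0 y1 Gv1 q1 + ipT x0 x1 y0 y1 Gv2 q2 =
        -(ipT x0 x1 y0 y1 v0 (fun x y => pd1 q1 x y + pd2 q2 x y))
          + ((∫ x in x0..x1, vbB x * (-(q2 x y0)))
            + (∫ x in x0..x1, vbT x * q2 x y1)
            + (∫ y in y0..y1, vbL y * (-(q1 x0 y)))
            + (∫ y in y0..y1, vbR y * q1 x1 y))) :
    ipT x0 x1 y0 y1 G1 Gv1 + ipT x0 x1 y0 y1 G2 Gv2 =
      ipT x0 x1 y0 y1 (pd1 u) (pd1 v0) + ipT x0 x1 y0 y1 (pd2 u) (pd2 v0)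
        - ((∫ x in x0..x1, (v0 x y0 - vbB x) * (-(P2 x y0)))
          + (∫ x in x0..x1, (v0 x y1 - vbT x) * P2 x y1)
          + (∫ y in y0..y1, (v0 x0 y - vbL y) * (-(P1 x0 y)))
          + (∫ y in y0..y1, (v0 x1 y - vbR y) * P1 x1 y)) := by
  calc ipT x0 x1 y0 y1 G1 Gv1 + ipT x0 x1 y0 y1 G2 Gv2
      = ipT x0 x1 y0 y1 P1 Gv1 + ipT x0 x1 y0 y1 P2 Gv2 :=
        IsWeakGradient.eq_projT_grad hu hP0u hP1 hP2 hqbB hqbT hqbL hqbR hG hGv1k hGv2k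
    _ = ipT x0 x1 y0 y1 Gv1 P1 + ipT x0 x1 y0 y1 Gv2 P2 := by rw [ipT_comm P1, ipT_comm P2]
    _ = ipT x0 x1 y0 y1 (pd1 v0) P1 + ipT x0 x1 y0 y1 (pd2 v0) P2
          - edgePairing x0 x1 y0 y1 (fun x => v0 x y0 - vbB x) (fun x => v0 x y1 - vbT x)
              (fun y => v0 x0 y - vbL y) (fun y => v0 x1 y - vbR y) P1 P2 :=
        IsWeakGradient.eq_grad_sub_edgePairing hv0 hvbB.1 hvbT.1 hvbL.1 hvbR.1 hGv hP1.1 hP2.1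
    _ = _ := by
      rw [ipT_comm (pd1 v0), ipT_comm (pd2 v0), ← hP1.ipT_eq (continuous_pd1 hu) hv0.pd1,
        ← hP2.ipT_eq (continuous_pd2 hu) hv0.pd2]
      rfl

/-- `(∇_w(Q_N u), ∇_w v)_T = (∇u, ∇v₀)_T − ⟨v₀ − v_b, (𝐐_N∇u)·𝐧⟩_{∂T}`
on the rectangle `T = [x0,x1] × [y0,y1]`. `(G1,G2)` is the discrete weak gradient of
`Q_N u = (Q₀u, Q_b u, 𝐐_g(∇u))`, `(Gv1,Gv2)` that of the triple `v = (v₀, v_b, 𝐯_g)`,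
and `(P1,P2) = 𝐐_N(∇u)`, all characterized by their defining identities. -/
theorem statement19 (k : ℕ) (hk : 3 ≤ k) (x0 x1 y0 y1 : ℝ) (hx : x0 < x1) (hy : y0 < y1)
    (u : ℝ → ℝ → ℝ) (hu : ContDiff ℝ 1 (fun p : ℝ × ℝ => u p.1 p.2))
    -- the projections defining Q_N u and 𝐐_N(∇u)
    (P0u P1 P2 : ℝ → ℝ → ℝ)
    (hP0u : IsProjT k x0 x1 y0 y1 u P0u)
    (hP1 : IsProjT k x0 x1 y0 y1 (pd1 u) P1)
    (hP2 : IsProjT k x0 x1 y0 y1 (pd2 u) P2)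
    (qbB qbT qbL qbR : ℝ → ℝ)
    (hqbB : IsProjE k x0 x1 (fun x => u x y0) qbB)
    (hqbT : IsProjE k x0 x1 (fun x => u x y1) qbT)
    (hqbL : IsProjE k y0 y1 (fun y => u x0 y) qbL)
    (hqbR : IsProjE k y0 y1 (fun y => u x1 y) qbR)
    -- the triple v = (v₀, v_b, 𝐯_g), with L² data on each edge
    (v0 : ℝ → ℝ → ℝ) (hv0 : IsQk k v0)
    (vbB vbT vbL vbR vg1B vg2B vg1T vg2T vg1L vg2L vg1R vg2R : ℝ → ℝ)
    (hvbB : L2Edge x0 x1 vbB) (hvbT : L2Edge x0 x1 vbT)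
    (hvbL : L2Edge y0 y1 vbL) (hvbR : L2Edge y0 y1 vbR)
    (hvg1B : L2Edge x0 x1 vg1B) (hvg2B : L2Edge x0 x1 vg2B)
    (hvg1T : L2Edge x0 x1 vg1T) (hvg2T : L2Edge x0 x1 vg2T)
    (hvg1L : L2Edge y0 y1 vg1L) (hvg2L : L2Edge y0 y1 vg2L)
    (hvg1R : L2Edge y0 y1 vg1R) (hvg2R : L2Edge y0 y1 vg2R)
    -- the discrete weak gradient of Q_N u
    (G1 G2 : ℝ → ℝ → ℝ) (hG1k : IsQk k G1) (hG2k : IsQk k G2)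
    (hG : ∀ q1 q2 : ℝ → ℝ → ℝ, IsQk k q1 → IsQk k q2 →
      ipT x0 x1 y0 y1 G1 q1 + ipT x0 x1 y0 y1 G2 q2 =
        -(ipT x0 x1 y0 y1 P0u (fun x y => pd1 q1 x y + pd2 q2 x y))
          + ((∫ x in x0..x1, qbB x * (-(q2 x y0)))
            + (∫ x in x0..x1, qbT x * q2 x y1)
            + (∫ y in y0..y1, qbL y * (-(q1 x0 y)))
            + (∫ y in y0..y1, qbR y * q1 x1 y)))
    -- the discrete weak gradient of v
    (Gv1 Gv2 : ℝ → ℝ → ℝ) (hGv1k : IsQk k Gv1) (hGv2k : IsQk k Gv2)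
    (hGv : ∀ q1 q2 : ℝ → ℝ → ℝ, IsQk k q1 → IsQk k q2 →
      ipT x0 x1 y0 y1 Gv1 q1 + ipT x0 x1 y0 y1 Gv2 q2 =
        -(ipT x0 x1 y0 y1 v0 (fun x y => pd1 q1 x y + pd2 q2 x y))
          + ((∫ x in x0..x1, vbB x * (-(q2 x y0)))
            + (∫ x in x0..x1, vbT x * q2 x y1)
            + (∫ y in y0..y1, vbL y * (-(q1 x0 y)))
            + (∫ y in y0..y1, vbR y * q1 x1 y))) :
    ipT x0 x1 y0 y1 G1 Gv1 + ipT x0 x1 y0 y1 G2 Gv2 =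
      ipT x0 x1 y0 y1 (pd1 u) (pd1 v0) + ipT x0 x1 y0 y1 (pd2 u) (pd2 v0)
        - ((∫ x in x0..x1, (v0 x y0 - vbB x) * (-(P2 x y0)))
          + (∫ x in x0..x1, (v0 x y1 - vbT x) * P2 x y1)
          + (∫ y in y0..y1, (v0 x0 y - vbL y) * (-(P1 x0 y)))
          + (∫ y in y0..y1, (v0 x1 y - vbR y) * P1 x1 y)) :=
  statement19_general k x0 x1 y0 y1 u hu P0u P1 P2 hP0u hP1 hP2 qbB qbT qbL qbR hqbB hqbT hqbL hqbR
    v0 hv0 vbB vbT vbL vbR hvbB hvbT hvbL hvbR G1 G2 hG Gv1 Gv2 hGv1k hGv2k hGv
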